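/- arXiv:1510.07290 — 2 statements merged into one kernel-verified Lean document; each statement's English description precedes it below -/
import Mathlib

section
/- The vector (F_sp, F_sg, F_pg), where F_sp = f_sg·f_pg + f_sg·f_ps + f_sp·f_pg, F_sg = f_sp·f_gs + f_sp·f_gp + f_sg·f_gp, and F_pg = f_gs·f_pg + f_gs·f_ps + f_gp·f_ps, is an eigenvector of A with eigenvalue 0 (i.e., A applied to this vector is the zero vector). -/
open Matrix

theorem stationary_eigenvector (f_gs f_gp f_pg f_ps f_sg f_sp : ℝ)
    (A : Matrix (Fin 3) (Fin 3) ℝ)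
    (hA : A = !![-f_gs - f_gp, f_pg, f_sg;
                 f_gp, -f_pg - f_ps, f_sp;
                 f_gs, f_ps, -f_sg - f_sp])
    (Fsp Fsg Fpg : ℝ)
    (hFsp : Fsp = f_sg * f_pg + f_sg * f_ps + f_sp * f_pg)
    (hFsg : Fsg = f_sp * f_gs + f_sp * f_gp + f_sg * f_gp)
    (hFpg : Fpg = f_gs * f_pg + f_gs * f_ps + f_gp * f_ps) :
    A *ᵥ ![Fsp, Fsg, Fpg] = 0 := by
  subst hA hFsp hFsg hFpg
  funext i
  fin_cases i <;>
    simp [mulVec, dotProduct, Fin.sum_univ_succ] <;> ring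
end

section
/- If all transition frequencies are nonnegative and Ω = F_sp + F_sg + F_pg > 0, then the stationary probabilities p_g = F_sp/Ω, p_p = F_sg/Ω, p_s = F_pg/Ω are nonnegative and sum to 1, and the vector (p_g, p_p, p_s) is a stationary distribution of A, i.e., A·(p_g, p_p, p_s)ᵀ = 0. -/
open Matrix

theorem stationary_distribution (f_gs f_gp f_pg f_ps f_sg f_sp : ℝ)
    (h1 : 0 ≤ f_gs) (h2 : 0 ≤ f_gp) (h3 : 0 ≤ f_pg)
    (h4 : 0 ≤ f_ps) (h5 : 0 ≤ f_sg) (h6 : 0 ≤ f_sp)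
    (A : Matrix (Fin 3) (Fin 3) ℝ)
    (hA : A = !![-f_gs - f_gp, f_pg, f_sg;
                 f_gp, -f_pg - f_ps, f_sp;
                 f_gs, f_ps, -f_sg - f_sp])
    (Fsp Fsg Fpg Ω : ℝ)
    (hFsp : Fsp = f_sg * f_pg + f_sg * f_ps + f_sp * f_pg)
    (hFsg : Fsg = f_sp * f_gs + f_sp * f_gp + f_sg * f_gp)
    (hFpg : Fpg = f_gs * f_pg + f_gs * f_ps + f_gp * f_ps)
    (hΩ : Ω = Fsp + Fsg + Fpg) (hΩpos : 0 < Ω)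
    (pg pp ps : ℝ)
    (hpg : pg = Fsp / Ω) (hpp : pp = Fsg / Ω) (hps : ps = Fpg / Ω) :
    0 ≤ pg ∧ 0 ≤ pp ∧ 0 ≤ ps ∧ pg + pp + ps = 1 ∧
    A *ᵥ ![pg, pp, ps] = 0 := by
  have hΩne : Ω ≠ 0 := ne_of_gt hΩpos
  refine ⟨?_, ?_, ?_, ?_, ?_⟩
  · rw [hpg]; exact div_nonneg (by nlinarith) hΩpos.le
  · rw [hpp]; exact div_nonneg (by nlinarith) hΩpos.le
  · rw [hps]; exact div_nonneg (by nlinarith) hΩpos.le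
  · rw [hpg, hpp, hps]; field_simp; linarith [hΩ]
  · subst hA hpg hpp hps hFsp hFsg hFpg
    funext i
    fin_cases i <;>
      simp [Matrix.mulVec, dotProduct, Fin.sum_univ_three] <;>
      field_simp <;> ring
end
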